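/- arXiv:2206.10752 — 2 statements merged into one kernel-verified Lean document; each statement's English description precedes it below -/
import Mathlib

section
/- Let n ≥ 1 and let G be a finite abelian group. Then G is minimally faithful of degree n if and only if there exists a prime p such that G is isomorphic to the elementary abelian p-group of rank n, i.e., G ≅ (ℤ/pℤ)^n (the direct product of n copies of the cyclic group of order p). -/
/-- `rdim G` is the smallest `n` such that `G` has a faithful `n`-dimensional
complex representation, i.e. an injective group homomorphism `G →* GL n ℂ`. -/
noncomputable def rdim (G : Type*) [Group G] : ℕ :=
  sInf {n : ℕ | ∃ ρ : G →* GL (Fin n) ℂ, Function.Injective ρ}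

/-- `G` is minimally faithful of degree `n` if `rdim G = n` and every proper
subgroup has strictly smaller representation dimension. -/
def MinFaithful (G : Type*) [Group G] (n : ℕ) : Prop :=
  rdim G = n ∧ ∀ H : Subgroup G, H ≠ ⊤ → rdim H < n


/-!
A faithful representation of a finite abelian group can be simultaneously diagonalised, so an
abelian `G` has a faithful `d`-dimensional representation iff it embeds into `(ℂˣ)ᵈ`. As `ℂˣ`
contains only `p` elements of order dividing `p`, this gives `rdim (ℤ/p)ᵏ = k`.

Conversely, suppose every elementary abelian subgroup `(ℤ/q)ᵏ ≤ G` has `k ≤ d`. Then in a primary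
decomposition `G ≅ ∏ ℤ/pᵢ^eᵢ` each prime occurs at most `d` times, so the cyclic factors can be
distributed over `d` coordinates with pairwise coprime orders within each coordinate, and the
product of injective characters of the factors in each coordinate embeds `G` into `(ℂˣ)ᵈ`.

Hence a minimally faithful abelian `G` of degree `n` which is not itself elementary abelian has
only proper elementary abelian subgroups, all of rank `< n`, forcing `rdim G < n`. In the other
direction, proper subgroups of `(ℤ/p)ⁿ` have order `< pⁿ`, hence elementary abelian subgroups of
rank `< n` only, so their `rdim` is `< n` by the same bound.
-/

open Function Polynomial

lemma rdim_congr {G H : Type*} [Group G] [Group H] (e : G ≃* H) : rdim G = rdim H := by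
  unfold rdim
  congr 1
  ext n
  exact ⟨fun ⟨ρ, hρ⟩ => ⟨ρ.comp e.symm.toMonoidHom, hρ.comp e.symm.injective⟩,
    fun ⟨ρ, hρ⟩ => ⟨ρ.comp e.toMonoidHom, hρ.comp e.injective⟩⟩

noncomputable def diagonalUnitsHom (ι K : Type*) [Fintype ι] [DecidableEq ι] [CommRing K] :
    (ι → Kˣ) →* GL ι K :=
  (Units.map (Matrix.diagonalRingHom ι K : (ι → K) →* Matrix ι ι K)).comp
    MulEquiv.piUnits.symm.toMonoidHom

lemma diagonalUnitsHom_injective (ι K : Type*) [Fintype ι] [DecidableEq ι] [CommRing K] :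
    Injective (diagonalUnitsHom ι K) := by
  intro u v huv
  funext i
  ext
  simpa [diagonalUnitsHom] using congrArg (fun A : GL ι K => (A : Matrix ι ι K) i i) huv

lemma exists_faithful_of_injective {G ι : Type*} [Group G] [Fintype ι] (φ : G →* (ι → ℂˣ))
    (hφ : Injective φ) : ∃ ρ : G →* GL (Fin (Fintype.card ι)) ℂ, Injective ρ := by
  let reindex := MulEquiv.arrowCongr (Fintype.equivFin ι) (MulEquiv.refl ℂˣ)
  exact ⟨(diagonalUnitsHom _ ℂ).comp (reindex.toMonoidHom.comp φ),
    (diagonalUnitsHom_injective _ ℂ).comp (reindex.injective.comp hφ)⟩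

lemma rdim_le_of_injective {G ι : Type*} [Group G] [Fintype ι] (φ : G →* (ι → ℂˣ))
    (hφ : Injective φ) : rdim G ≤ Fintype.card ι :=
  Nat.sInf_le (exists_faithful_of_injective φ hφ)

lemma ZMod.exists_injective_units (N : ℕ) [NeZero N] :
    ∃ χ : Multiplicative (ZMod N) →* ℂˣ, Injective χ :=
  ⟨Circle.toUnits.comp ZMod.toCircle.toMonoidHom,
    fun _ _ h => ZMod.injective_toCircle (Subtype.ext (congrArg Units.val h))⟩

lemma exists_injective_pi_units (G : Type*) [CommGroup G] [Finite G] :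
    ∃ (ι : Type) (_ : Fintype ι) (φ : G →* (ι → ℂˣ)), Injective φ := by
  obtain ⟨ι, _, n, hn, ⟨E⟩⟩ := CommGroup.equiv_prod_multiplicative_zmod_of_finite G
  have : ∀ i, NeZero (n i) := fun i => ⟨(zero_lt_one.trans (hn i)).ne'⟩
  choose χ hχ using fun i => ZMod.exists_injective_units (n i)
  exact ⟨ι, inferInstance, (MonoidHom.piMap χ).comp E.toMonoidHom,
    (Injective.piMap hχ).comp E.injective⟩

lemma exists_faithful_rdim (G : Type*) [CommGroup G] [Finite G] :
    ∃ ρ : G →* GL (Fin (rdim G)) ℂ, Injective ρ := by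
  obtain ⟨ι, _, φ, hφ⟩ := exists_injective_pi_units G
  exact Nat.sInf_mem (s := {n | ∃ ρ : G →* GL (Fin n) ℂ, Injective ρ})
    ⟨_, exists_faithful_of_injective φ hφ⟩

lemma card_le_pow_of_injective_pi_units {K G ι : Type*} [CommRing K] [IsDomain K] [Group G]
    [Fintype ι] {m : ℕ} [NeZero m] (hG : ∀ g : G, g ^ m = 1) (φ : G →* (ι → Kˣ)) (hφ : Injective φ) :
    Nat.card G ≤ m ^ Fintype.card ι := by
  have hroot : ∀ g i, φ g i ∈ rootsOfUnity m K := fun g i => by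
    rw [mem_rootsOfUnity, ← Pi.pow_apply, ← map_pow, hG, map_one, Pi.one_apply]
  calc Nat.card G ≤ Nat.card (ι → rootsOfUnity m K) :=
        Nat.card_le_card_of_injective (fun g i => ⟨φ g i, hroot g i⟩)
          fun g h hgh => hφ (funext fun i => congrArg Subtype.val (congrFun hgh i))
    _ ≤ m ^ Fintype.card ι := by
        rw [Nat.card_fun, Nat.card_eq_fintype_card (α := ι)]
        exact Nat.pow_le_pow_left (card_rootsOfUnity K m) _

section SimultaneousDiagonalization

variable {K V G : Type*} [Field K] [AddCommGroup V] [Module K V]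

lemma Module.End.isSemisimple_of_pow_eq_one {f : Module.End K V} {m : ℕ} (hm : (m : K) ≠ 0)
    (hf : f ^ m = 1) : f.IsSemisimple :=
  isSemisimple_of_squarefree_aeval_eq_zero (separable_X_pow_sub_C 1 hm one_ne_zero).squarefree
    (by simp [hf])

lemma exists_monoidHom_of_eigenvector [Group G] (ρ : G →* Module.End K V) {v : V} (hv : v ≠ 0)
    (χ : G → K) (hχ : ∀ g, ρ g v = χ g • v) : ∃ ψ : G →* Kˣ, ∀ g, (ψ g : K) = χ g := by
  have hone : χ 1 = 1 := smul_left_injective K hv (by simp [← hχ])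
  have hmul : ∀ g h, χ (g * h) = χ g * χ h := fun g h => smul_left_injective K hv <| by
    change χ (g * h) • v = (χ g * χ h) • v
    rw [← hχ, map_mul, Module.End.mul_apply, hχ h, map_smul, hχ g, smul_smul, mul_comm]
  exact ⟨(MonoidHom.mk ⟨χ, hone⟩ hmul).toHomUnits, fun _ => rfl⟩

variable [IsAlgClosed K] [CharZero K] [FiniteDimensional K V] [CommGroup G] [Finite G]

theorem exists_injective_pi_units_of_injective (ρ : G →* Module.End K V) (hρ : Injective ρ) :
    ∃ φ : G →* (Fin (Module.finrank K V) → Kˣ), Injective φ := by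
  have hcomm : ∀ g h, Commute (ρ g) (ρ h) := fun g h => by
    rw [Commute, SemiconjBy, ← map_mul, ← map_mul, mul_comm]
  have hss : ∀ g μ, (ρ g).maxGenEigenspace μ = (ρ g).eigenspace μ := fun g =>
    (Module.End.isSemisimple_of_pow_eq_one (Nat.cast_ne_zero.mpr (orderOf_pos g).ne')
      (by rw [← map_pow, pow_orderOf_eq_one, map_one])).isFinitelySemisimple
      |>.maxGenEigenspace_eq_eigenspace
  set W : (G → K) → Submodule K V := fun χ => ⨅ g, (ρ g).maxGenEigenspace (χ g)
  have hW : ∀ χ, ∀ v ∈ W χ, ∀ g, ρ g v = χ g • v := fun χ v hv g =>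
    Module.End.mem_eigenspace_iff.mp (hss g (χ g) ▸ (Submodule.mem_iInf _).mp hv g)
  have htop : ⨆ χ, W χ = ⊤ :=
    Module.End.iSup_iInf_maxGenEigenspace_eq_top_of_iSup_maxGenEigenspace_eq_top_of_commute ρ
      (fun g h _ => hcomm g h) fun g => Module.End.iSup_maxGenEigenspace_eq_top (ρ g)
  have hind : iSupIndep W := Module.End.independent_iInf_maxGenEigenspace_of_forall_mapsTo ρ
    fun g h μ => Module.End.mapsTo_maxGenEigenspace_of_comm (hcomm h g) μ
  let := hind.fintypeNeBotOfFiniteDimensional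
  have hchar : ∀ χ : {χ // W χ ≠ ⊥}, ∃ ψ : G →* Kˣ, ∀ g, (ψ g : K) = χ.1 g := fun χ => by
    obtain ⟨v, hvW, hv⟩ := (Submodule.ne_bot_iff _).mp χ.2
    exact exists_monoidHom_of_eigenvector ρ hv χ.1 (hW χ.1 v hvW)
  choose ψ hψ using hchar
  obtain ⟨ε⟩ := Embedding.nonempty_of_card_le (hind.subtype_ne_bot_le_finrank.trans_eq
    (Fintype.card_fin _).symm)
  refine ⟨(ExtendByOne.hom Kˣ ε).comp (MonoidHom.pi ψ), ?_⟩
  rw [injective_iff_map_eq_one]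
  intro g hg
  have hψg : ∀ χ, ψ χ g = 1 := fun χ => by
    simpa [ε.injective.extend_apply] using congrFun hg (ε χ)
  have hfix : ⊤ ≤ (ρ g).eigenspace 1 := htop ▸ iSup_le fun χ => by
    by_cases hχ : W χ = ⊥
    · exact hχ ▸ bot_le
    · have hχg : χ g = 1 := by simpa [hψg] using (hψ ⟨χ, hχ⟩ g).symm
      intro v hv
      rw [Module.End.mem_eigenspace_iff, hW χ v hv g, hχg]
  exact hρ (LinearMap.ext fun v => by
    simpa using Module.End.mem_eigenspace_iff.mp (hfix Submodule.mem_top))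

end SimultaneousDiagonalization

lemma card_le_pow_rdim {G : Type*} [CommGroup G] [Finite G] {m : ℕ} [NeZero m]
    (hG : ∀ g : G, g ^ m = 1) : Nat.card G ≤ m ^ rdim G := by
  obtain ⟨ρ, hρ⟩ := exists_faithful_rdim G
  let toEnd : GL (Fin (rdim G)) ℂ →* Module.End ℂ (Fin (rdim G) → ℂ) :=
    (Units.coeHom _).comp Matrix.GeneralLinearGroup.toLin.toMonoidHom
  obtain ⟨φ, hφ⟩ := exists_injective_pi_units_of_injective (toEnd.comp ρ)
    ((Units.val_injective.comp Matrix.GeneralLinearGroup.toLin.injective).comp hρ)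
  simpa using card_le_pow_of_injective_pi_units hG φ hφ

lemma pi_zmod_pow_eq_one {κ : Type*} {p : ℕ} (x : κ → Multiplicative (ZMod p)) : x ^ p = 1 := by
  funext i
  rw [Pi.pow_apply, Pi.one_apply, ← toAdd_eq_zero, toAdd_pow]
  simp

theorem rdim_pi_zmod (κ : Type*) [Fintype κ] (p : ℕ) [hp : Fact p.Prime] :
    rdim (κ → Multiplicative (ZMod p)) = Fintype.card κ := by
  obtain ⟨χ, hχ⟩ := ZMod.exists_injective_units p
  refine le_antisymm (rdim_le_of_injective (MonoidHom.piMap fun _ => χ)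
    (Injective.piMap fun _ => hχ)) ?_
  have hcard := card_le_pow_rdim (pi_zmod_pow_eq_one (κ := κ) (p := p))
  simp only [Nat.card_fun, Nat.card_eq_fintype_card, Fintype.card_multiplicative, ZMod.card]
    at hcard
  exact (Nat.pow_le_pow_iff_right hp.out.one_lt).mp hcard

def MulEquiv.piSubtypeOfSubsingleton {ι : Type*} {M : ι → Type*} [∀ i, Monoid (M i)]
    (S : ι → Prop) [DecidablePred S] (h : ∀ i, ¬ S i → Subsingleton (M i)) :
    (∀ i, M i) ≃* ∀ i : Subtype S, M i where
  toFun x i := x i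
  invFun y i := if hi : S i then y ⟨i, hi⟩ else 1
  left_inv x := funext fun i => by
    by_cases hi : S i
    · simp [hi]
    · exact (h i hi).elim _ _
  right_inv y := funext fun i => by simp [i.2]
  map_mul' _ _ := rfl

theorem CommGroup.exists_mulEquiv_pi_zmod_prime_pow (G : Type*) [CommGroup G] [Finite G] :
    ∃ (ι : Type) (_ : Fintype ι) (p e : ι → ℕ), (∀ i, (p i).Prime) ∧ (∀ i, e i ≠ 0) ∧
      Nonempty (G ≃* ∀ i, Multiplicative (ZMod (p i ^ e i))) := by
  classical
  obtain ⟨ι, _, p, hp, e, ⟨E⟩⟩ := AddCommGroup.equiv_directSum_zmod_of_finite (Additive G)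
  let E' : G ≃* ∀ i, Multiplicative (ZMod (p i ^ e i)) := MulEquiv.toAdditive.symm <|
    E.trans <| (DirectSum.addEquivProd _).trans (MulEquiv.piMultiplicative _).toAdditiveRight
  refine ⟨{i // e i ≠ 0}, inferInstance, fun i => p i, fun i => e i, fun i => hp i,
    fun i => i.2, ⟨E'.trans (MulEquiv.piSubtypeOfSubsingleton _ fun i hi => ?_)⟩⟩
  rw [not_not.mp hi, pow_zero]
  infer_instance

lemma exists_injective_zmod_of_dvd_card {M : Type*} [Group M] [Finite M] {q : ℕ}
    [Fact q.Prime] (h : q ∣ Nat.card M) : ∃ f : Multiplicative (ZMod q) →* M, Injective f := by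
  obtain ⟨g, hg⟩ := exists_prime_orderOf_dvd_card' q h
  let e : Multiplicative (ZMod q) ≃* Subgroup.zpowers g :=
    mulEquivOfPrimeCardEq (p := q) (by simp) (by rw [Nat.card_zpowers, hg])
  exact ⟨(Subgroup.zpowers g).subtype.comp e.toMonoidHom, Subtype.val_injective.comp e.injective⟩

lemma exists_injective_pi_zmod_of_dvd_card {ι : Type*} {M : ι → Type*} [∀ i, Group (M i)]
    [∀ i, Finite (M i)] (q : ℕ) [Fact q.Prime] :
    ∃ f : ({i // q ∣ Nat.card (M i)} → Multiplicative (ZMod q)) →* ∀ i, M i, Injective f := by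
  classical
  choose g hg using fun i : {i // q ∣ Nat.card (M i)} => exists_injective_zmod_of_dvd_card i.2
  refine ⟨{ toFun := fun x i => if h : q ∣ Nat.card (M i) then g ⟨i, h⟩ (x ⟨i, h⟩) else 1
            map_one' := funext fun i => by by_cases h : q ∣ Nat.card (M i) <;> simp [h]
            map_mul' := fun x y => funext fun i => by
              by_cases h : q ∣ Nat.card (M i) <;> simp [h] }, ?_⟩
  intro x y hxy
  funext i
  exact hg i (by simpa [i.2] using congrFun hxy i.1)

lemma exists_fin_injective_on_fibers {ι β : Type*} [Fintype ι] [DecidableEq β] (c : ι → β)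
    {d : ℕ} (h : ∀ b, Fintype.card {i // c i = b} ≤ d) :
    ∃ r : ι → Fin d, ∀ i j, c i = c j → r i = r j → i = j := by
  let f : ∀ b, {i // c i = b} ↪ Fin d := fun b =>
    (Embedding.nonempty_of_card_le ((h b).trans_eq (Fintype.card_fin d).symm)).some
  have hf : ∀ i b (hb : c i = b), f b ⟨i, hb⟩ = f (c i) ⟨i, rfl⟩ := by
    rintro i _ rfl
    rfl
  exact ⟨fun i => f (c i) ⟨i, rfl⟩, fun i j hc hr =>
    congrArg Subtype.val ((f (c j)).injective ((hf i _ hc).trans hr))⟩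

lemma exists_injective_pi_of_coprime {ι κ A : Type*} {M : ι → Type*} [Fintype ι] [DecidableEq κ]
    [∀ i, Group (M i)] [∀ i, Finite (M i)] [CommGroup A] (χ : ∀ i, M i →* A)
    (hχ : ∀ i, Injective (χ i)) (r : ι → κ)
    (hr : ∀ i j, i ≠ j → r i = r j → (Nat.card (M i)).Coprime (Nat.card (M j))) :
    ∃ φ : (∀ i, M i) →* (κ → A), Injective φ := by
  have : ∀ i, Fintype (M i) := fun i => Fintype.ofFinite (M i)
  let restrict (k : κ) : (∀ i, M i) →* ∀ i : {i // r i = k}, M i :=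
    MonoidHom.pi fun i => Pi.evalMonoidHom M i.1
  let prod (k : κ) : (∀ i : {i // r i = k}, M i) →* A :=
    MonoidHom.noncommPiCoprod (fun i => χ i) fun _ _ _ _ _ => Commute.all _ _
  -- within a fibre of `r` the orders are coprime, so the images of the factors are independent
  have hprod : ∀ k, Injective (prod k) := by
    intro k
    refine MonoidHom.injective_noncommPiCoprod_of_iSupIndep _ ?_ fun i => hχ i
    refine MonoidHom.independent_range_of_coprime_order _ (fun _ _ _ _ _ => Commute.all _ _) ?_
    intro i j hij
    simpa [Nat.card_eq_fintype_card] using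
      hr i j (Subtype.coe_injective.ne hij) (i.2.trans j.2.symm)
  refine ⟨MonoidHom.pi fun k => (prod k).comp (restrict k), fun x y hxy => funext fun i => ?_⟩
  exact congrFun (hprod (r i) (congrFun hxy (r i))) ⟨i, rfl⟩

theorem rdim_le_of_forall_injective_pi_zmod {G : Type*} [CommGroup G] [Finite G] {d : ℕ}
    (h : ∀ (κ : Type) [Fintype κ] (q : ℕ) [Fact q.Prime]
      (f : (κ → Multiplicative (ZMod q)) →* G), Injective f → Fintype.card κ ≤ d) :
    rdim G ≤ d := by
  obtain ⟨ι, _, p, e, hp, he, ⟨E⟩⟩ := CommGroup.exists_mulEquiv_pi_zmod_prime_pow G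
  have : ∀ i, NeZero (p i ^ e i) := fun i => ⟨pow_ne_zero _ (hp i).ne_zero⟩
  have hcard : ∀ i, Nat.card (Multiplicative (ZMod (p i ^ e i))) = p i ^ e i := by simp
  have hfiber : ∀ q, Fintype.card {i // p i = q} ≤ d := by
    intro q
    by_cases hq : q.Prime
    · have := Fact.mk hq
      obtain ⟨f, hf⟩ :=
        exists_injective_pi_zmod_of_dvd_card (M := fun i => Multiplicative (ZMod (p i ^ e i))) q
      have hsub : ∀ i, p i = q → q ∣ Nat.card (Multiplicative (ZMod (p i ^ e i))) :=
        fun i hi => by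
          rw [hcard, hi]
          exact dvd_pow_self q (he i)
      exact (Fintype.card_subtype_mono _ _ hsub).trans
        (h _ q (E.symm.toMonoidHom.comp f) (E.symm.injective.comp hf))
    · have : IsEmpty {i // p i = q} := ⟨fun i => hq (i.2 ▸ hp i.1)⟩
      simp
  obtain ⟨r, hr⟩ := exists_fin_injective_on_fibers p hfiber
  choose χ hχ using fun i => ZMod.exists_injective_units (p i ^ e i)
  obtain ⟨φ, hφ⟩ := exists_injective_pi_of_coprime χ hχ r fun i j hij hrij => by
    rw [hcard, hcard]
    exact Nat.Coprime.pow _ _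
      ((Nat.coprime_primes (hp i) (hp j)).mpr fun hpij => hij (hr i j hpij hrij))
  simpa using rdim_le_of_injective (φ.comp E.toMonoidHom) (hφ.comp E.injective)

lemma card_lt_of_injective_pi_zmod {E κ : Type*} [Group E] [Fintype κ] {p q n : ℕ}
    (hp : p.Prime) [hq : Fact q.Prime] (hdvd : Nat.card E ∣ p ^ n) (hlt : Nat.card E < p ^ n)
    (f : (κ → Multiplicative (ZMod q)) →* E) (hf : Injective f) : Fintype.card κ < n := by
  obtain ⟨k, -, hE⟩ := (Nat.dvd_prime_pow hp).mp hdvd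
  have hkn : k < n := (Nat.pow_lt_pow_iff_right hp.one_lt).mp (hE ▸ hlt)
  have hqk : q ^ Fintype.card κ ∣ p ^ k := by
    simpa [hE, Nat.card_fun] using Subgroup.card_dvd_of_injective f hf
  by_cases hqp : q = p
  · subst hqp
    exact ((Nat.pow_dvd_pow_iff_le_right hp.one_lt).mp hqk).trans_lt hkn
  · have hcop := Nat.Coprime.pow (Fintype.card κ) k ((Nat.coprime_primes hq.out hp).mpr hqp)
    have := Nat.pow_eq_one.mp (hcop.eq_one_of_dvd hqk)
    have := hq.out.one_lt
    omega

theorem stmt_0 (n : ℕ) (hn : 1 ≤ n) (G : Type*) [Group G] [Finite G]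
    (hab : ∀ a b : G, a * b = b * a) :
    MinFaithful G n ↔
      ∃ p : ℕ, p.Prime ∧ Nonempty (G ≃* (Fin n → Multiplicative (ZMod p))) := by
  let _ : CommGroup G := { ‹Group G› with mul_comm := hab }
  constructor
  · rintro ⟨hrdim, hsub⟩
    by_cases hA : ∃ (κ : Type) (_ : Fintype κ) (q : ℕ) (_ : Fact q.Prime)
      (f : (κ → Multiplicative (ZMod q)) →* G), Bijective f
    · obtain ⟨κ, _, q, hq, f, hf⟩ := hA
      let E := (MulEquiv.ofBijective f hf).symm
      have hκ : Fintype.card κ = n := by rw [← hrdim, rdim_congr E, rdim_pi_zmod]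
      exact ⟨q, hq.out,
        ⟨E.trans (MulEquiv.arrowCongr (Fintype.equivFinOfCardEq hκ) (MulEquiv.refl _))⟩⟩
    · have : rdim G ≤ n - 1 := rdim_le_of_forall_injective_pi_zmod fun κ _ q _ f hf => by
        have hne : f.range ≠ ⊤ := fun htop =>
          hA ⟨κ, inferInstance, q, inferInstance, f, hf, MonoidHom.range_eq_top.mp htop⟩
        have := hsub _ hne
        rw [← rdim_congr (MonoidHom.ofInjective hf), rdim_pi_zmod] at this
        omega
      omega
  · rintro ⟨p, hp, ⟨E⟩⟩
    have := Fact.mk hp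
    have hcard : Nat.card G = p ^ n := by simp [Nat.card_congr E.toEquiv]
    refine ⟨by rw [rdim_congr E, rdim_pi_zmod, Fintype.card_fin], fun H hH => ?_⟩
    have hlt : Nat.card H < p ^ n :=
      hcard ▸ H.card_le_card_group.lt_of_ne fun h => hH (H.eq_top_of_card_eq h)
    have : rdim H ≤ n - 1 := rdim_le_of_forall_injective_pi_zmod fun κ _ q _ f hf => by
      have := card_lt_of_injective_pi_zmod hp (hcard ▸ H.card_subgroup_dvd_card) hlt f hf
      omega
    omega
end

section
/- Let G be a finite group that is minimally faithful of degree 3, and suppose the intersection Z(G) ∩ [G,G] of the center with the commutator subgroup has even order. Then every injective group homomorphism ρ : G → GL_3(ℂ) is reducible, i.e., there is a ℂ-subspace W of ℂ³ with W ≠ 0 and W ≠ ℂ³ that is invariant under ρ(g) for every g ∈ G; moreover there exists an injective group homomorphism from the commutator subgroup [G,G] into SL_2(ℂ). -/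
/-! A central involution `z ∈ [G,G]` (Cauchy) acts in a faithful representation `ρ` on `ℂ³` by an
involution of determinant `1`, hence by neither `1` nor `-1` (as `det (-1) = -1` in odd
dimension). Since `z` is central, its `±1`-eigenspaces are `G`-invariant and split `ℂ³` into a
line and a plane. The determinant is a homomorphism to an abelian group, so `[G,G]` acts on the
line trivially and on the plane through `SL₂(ℂ)`, faithfully because `ρ` is. -/

open Module Module.End

namespace Module.End

variable {K V : Type*} [Field K] [AddCommGroup V] [Module K V]

theorem eigenspace_eq_top_iff {f : End K V} {μ : K} : f.eigenspace μ = ⊤ ↔ f = μ • 1 := by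
  simp only [eq_top_iff, SetLike.le_def, Submodule.mem_top, mem_eigenspace_iff, forall_const,
    LinearMap.ext_iff, LinearMap.smul_apply, one_apply]

theorem isCompl_eigenspace_one_neg_one (h2 : (2 : K) ≠ 0) {t : End K V} (ht : t * t = 1) :
    IsCompl (t.eigenspace 1) (t.eigenspace (-1)) := by
  have hsq (v : V) : t (t v) = v := by rw [← mul_apply, ht, one_apply]
  refine ⟨?_, ?_⟩
  · exact t.disjoint_genEigenspace (fun h => h2 (by linear_combination h)) 1 1
  · rw [codisjoint_iff, eq_top_iff]
    intro v _
    have hv : v = (2⁻¹ : K) • (v + t v) + (2⁻¹ : K) • (v - t v) := by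
      rw [← smul_add, add_add_sub_cancel, ← two_smul K, smul_smul, inv_mul_cancel₀ h2, one_smul]
    rw [hv]
    refine Submodule.add_mem_sup (Submodule.smul_mem _ _ ?_) (Submodule.smul_mem _ _ ?_)
    · rw [mem_eigenspace_iff, map_add, hsq, one_smul, add_comm]
    · rw [mem_eigenspace_iff, map_sub, hsq, neg_one_smul, neg_sub]

theorem eigenspace_one_ne_bot_and_neg_one_ne_bot (h2 : (2 : K) ≠ 0) {t : End K V}
    (ht : t * t = 1) (hp : t ≠ 1) (hm : t ≠ -1) :
    t.eigenspace 1 ≠ ⊥ ∧ t.eigenspace (-1) ≠ ⊥ := by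
  have hc := isCompl_eigenspace_one_neg_one h2 ht
  refine ⟨fun h => hm ?_, fun h => hp ?_⟩
  · rw [← neg_one_smul K 1]
    exact eigenspace_eq_top_iff.mp (eq_top_of_bot_isCompl (h ▸ hc))
  · rw [← one_smul K 1]
    exact eigenspace_eq_top_iff.mp (eq_top_of_isCompl_bot (h ▸ hc))

theorem ne_neg_one_of_det_eq_one (h2 : (2 : K) ≠ 0) (hodd : Odd (finrank K V)) {f : End K V}
    (hf : LinearMap.det f = 1) : f ≠ -1 := by
  rintro rfl
  rw [← neg_one_smul K 1, LinearMap.det_smul, hodd.neg_one_pow, map_one, mul_one] at hf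
  exact h2 (by linear_combination -hf)

theorem eq_one_of_det_eq_one (h1 : finrank K V = 1) {f : End K V} (hf : LinearMap.det f = 1) :
    f = 1 := by
  obtain ⟨c, rfl, -⟩ := f.existsUnique_eq_smul_id_of_finrank_eq_one h1
  rw [LinearMap.det_smul, h1, pow_one, LinearMap.det_id, mul_one] at hf
  rw [hf, one_smul, one_eq_id]

end Module.End

namespace Representation

variable {K G V : Type*} [Field K] [Group G] [AddCommGroup V] [Module K V]
  (ρ : Representation K G V) {n : Type*} [Fintype n] [DecidableEq n]

theorem det_eq_one_of_mem_commutator {g : G} (hg : g ∈ commutator G) :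
    LinearMap.det (ρ g) = 1 :=
  congrArg Units.val (Abelianization.commutator_subset_ker (LinearMap.det.comp ρ).toHomUnits hg)

def centralEigenspace {z : G} (hz : z ∈ Subgroup.center G) (μ : K) : Subrepresentation ρ where
  toSubmodule := eigenspace (ρ z) μ
  apply_mem_toSubmodule g :=
    mapsTo_genEigenspace_of_comm (Commute.map (Subgroup.mem_center_iff.mp hz g).symm ρ) μ 1

theorem exists_isCompl_of_central_involution (h2 : (2 : K) ≠ 0) {z : G}
    (hz : z ∈ Subgroup.center G) (hsq : ρ z * ρ z = 1) (hp : ρ z ≠ 1) (hm : ρ z ≠ -1) :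
    ∃ U₁ U₂ : Subrepresentation ρ, IsCompl U₁.toSubmodule U₂.toSubmodule ∧
      U₁.toSubmodule ≠ ⊥ ∧ U₂.toSubmodule ≠ ⊥ :=
  ⟨ρ.centralEigenspace hz 1, ρ.centralEigenspace hz (-1), isCompl_eigenspace_one_neg_one h2 hsq,
    eigenspace_one_ne_bot_and_neg_one_ne_bot h2 hsq hp hm⟩

theorem exists_isCompl_of_odd_finrank (h2 : (2 : K) ≠ 0) (hodd : Odd (finrank K V))
    (hρ : Function.Injective ρ) {z : G} (hzc : z ∈ Subgroup.center G)
    (hzk : z ∈ commutator G) (hz : orderOf z = 2) :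
    ∃ U₁ U₂ : Subrepresentation ρ, IsCompl U₁.toSubmodule U₂.toSubmodule ∧
      U₁.toSubmodule ≠ ⊥ ∧ U₂.toSubmodule ≠ ⊥ := by
  refine ρ.exists_isCompl_of_central_involution h2 hzc ?_ ?_
    (ne_neg_one_of_det_eq_one h2 hodd (ρ.det_eq_one_of_mem_commutator hzk))
  · rw [← map_mul, ← sq, ← hz, pow_orderOf_eq_one, map_one]
  · rw [← map_one ρ, hρ.ne_iff]
    rintro rfl
    simp at hz

variable {ρ} in
theorem _root_.Subrepresentation.toRepresentation_eq_one_of_finrank_eq_one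
    (U : Subrepresentation ρ) (h1 : finrank K U.toSubmodule = 1) {g : G} (hg : g ∈ commutator G) :
    U.toRepresentation g = 1 :=
  eq_one_of_det_eq_one h1 (U.toRepresentation.det_eq_one_of_mem_commutator hg)

noncomputable def commutatorToSpecialLinearGroup (b : Basis n K V) :
    commutator G →* Matrix.SpecialLinearGroup n K where
  toFun g := ⟨LinearMap.toMatrix b b (ρ g), by
    rw [LinearMap.det_toMatrix]; exact ρ.det_eq_one_of_mem_commutator g.2⟩
  map_one' := Subtype.ext (by simp)
  map_mul' g h :=
    Subtype.ext (by simp only [Subgroup.coe_mul, map_mul, LinearMap.toMatrix_mul]; rfl)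

theorem commutatorToSpecialLinearGroup_injective (b : Basis n K V)
    (hρ : ∀ g ∈ commutator G, ρ g = 1 → g = 1) :
    Function.Injective (ρ.commutatorToSpecialLinearGroup b) := by
  rw [injective_iff_map_eq_one]
  rintro ⟨g, hg⟩ h
  refine Subtype.ext (hρ g hg ?_)
  apply (LinearMap.toMatrix b b).injective
  rw [LinearMap.toMatrix_one]
  exact congrArg Subtype.val h

theorem eq_one_of_toRepresentation_eq_one {U₁ U₂ : Subrepresentation ρ}
    (hc : Codisjoint U₁.toSubmodule U₂.toSubmodule) {g : G} (h₁ : U₁.toRepresentation g = 1)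
    (h₂ : U₂.toRepresentation g = 1) : ρ g = 1 :=
  LinearMap.ext_on_codisjoint hc
    (fun v hv => congrArg Subtype.val (LinearMap.ext_iff.mp h₁ ⟨v, hv⟩))
    (fun v hv => congrArg Subtype.val (LinearMap.ext_iff.mp h₂ ⟨v, hv⟩))

theorem exists_injective_commutator_to_specialLinearGroup [FiniteDimensional K V]
    (hρ : Function.Injective ρ) {U₁ U₂ : Subrepresentation ρ}
    (hc : IsCompl U₁.toSubmodule U₂.toSubmodule) (h₁ : finrank K U₁.toSubmodule = 1) {m : ℕ}
    (h₂ : finrank K U₂.toSubmodule = m) :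
    ∃ ι : commutator G →* Matrix.SpecialLinearGroup (Fin m) K, Function.Injective ι :=
  ⟨U₂.toRepresentation.commutatorToSpecialLinearGroup (finBasisOfFinrankEq K _ h₂),
    commutatorToSpecialLinearGroup_injective _ _ fun g hg hg₂ => hρ <| by
      rw [map_one]
      exact ρ.eq_one_of_toRepresentation_eq_one hc.codisjoint
        (U₁.toRepresentation_eq_one_of_finrank_eq_one h₁ hg) hg₂⟩

def ofGL (φ : G →* GL n K) : Representation K G (n → K) :=
  Matrix.toLinAlgEquiv'.toMonoidHom.comp ((Units.coeHom _).comp φ)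

theorem ofGL_apply (φ : G →* GL n K) (g : G) (v : n → K) :
    ofGL φ g v = Matrix.mulVec (φ g : Matrix n n K) v :=
  rfl

theorem ofGL_injective {φ : G →* GL n K} (hφ : Function.Injective φ) :
    Function.Injective (ofGL φ) :=
  Matrix.toLinAlgEquiv'.injective.comp (Units.val_injective.comp hφ)

end Representation

theorem exists_injective_of_rdim_eq {G : Type*} [Group G] {n : ℕ} (h : rdim G = n) (hn : 0 < n) :
    ∃ ρ : G →* GL (Fin n) ℂ, Function.Injective ρ :=
  h ▸ Nat.sInf_mem (Nat.nonempty_of_pos_sInf (h ▸ hn))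

theorem stmt_6 (G : Type*) [Group G] [Finite G] (h : MinFaithful G 3)
    (heven : Even (Nat.card (Subgroup.center G ⊓ commutator G : Subgroup G))) :
    (∀ ρ : G →* GL (Fin 3) ℂ, Function.Injective ρ →
      ∃ W : Submodule ℂ (Fin 3 → ℂ), W ≠ ⊥ ∧ W ≠ ⊤ ∧
        ∀ g : G, ∀ v ∈ W, Matrix.mulVec (ρ g : Matrix (Fin 3) (Fin 3) ℂ) v ∈ W) ∧
    ∃ ι : commutator G →* Matrix.SpecialLinearGroup (Fin 2) ℂ, Function.Injective ι := by
  obtain ⟨z, hz⟩ := exists_prime_orderOf_dvd_card'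
    (G := ↥(Subgroup.center G ⊓ commutator G)) 2 heven.two_dvd
  obtain ⟨hzc, hzk⟩ := Subgroup.mem_inf.mp z.2
  have hsplit (ρ : G →* GL (Fin 3) ℂ) (hρ : Function.Injective ρ) :=
    (Representation.ofGL ρ).exists_isCompl_of_odd_finrank two_ne_zero
      (by rw [finrank_fin_fun]; decide) (Representation.ofGL_injective hρ) hzc hzk
      (by rwa [Subgroup.orderOf_coe])
  refine ⟨fun ρ hρ => ?_, ?_⟩
  · obtain ⟨U₁, U₂, hc, h₁, h₂⟩ := hsplit ρ hρ
    exact ⟨U₁.toSubmodule, h₁, fun htop => h₂ (eq_bot_of_top_isCompl (by rwa [htop] at hc)),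
      fun g v hv => Representation.ofGL_apply ρ g v ▸ U₁.apply_mem_toSubmodule g hv⟩
  · obtain ⟨ρ, hρ⟩ := exists_injective_of_rdim_eq h.1 three_pos
    obtain ⟨U₁, U₂, hc, h₁, h₂⟩ := hsplit ρ hρ
    have hsum := Submodule.finrank_add_eq_of_isCompl hc
    have hne₁ := Submodule.finrank_eq_zero.not.mpr h₁
    have hne₂ := Submodule.finrank_eq_zero.not.mpr h₂
    rw [finrank_fin_fun] at hsum
    have hρ' := Representation.ofGL_injective hρ
    obtain ⟨h1, h2⟩ | ⟨h2, h1⟩ : (finrank ℂ U₁.toSubmodule = 1 ∧ finrank ℂ U₂.toSubmodule = 2) ∨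
        (finrank ℂ U₁.toSubmodule = 2 ∧ finrank ℂ U₂.toSubmodule = 1) := by omega
    · exact (Representation.ofGL ρ).exists_injective_commutator_to_specialLinearGroup hρ' hc h1 h2
    · exact (Representation.ofGL ρ).exists_injective_commutator_to_specialLinearGroup hρ' hc.symm
        h1 h2
end
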